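/- The south pole and the origin are asymptotically reachable in the auxiliary planar system: if γ > 0, then (0,−1) ∈ cl A₊(0,1) and (0,0) ∈ cl A₊(0,1). -/

import Mathlib

/-!
Both points are limits of explicit trajectories with constant controls. With `θ ≡ -π/2` the
vertical axis is invariant and `R` relaxes exponentially, `R(t) = -1 + 2e^{-γt}`, towards the
south pole. With `θ ≡ 0` the system is a damped rotation,
`(z, R)(t) = e^{-γt/2}(-sin ωt, cos ωt)`, which spirals into the origin.
-/

open MeasureTheory Set

noncomputable section

/-- Velocity of the auxiliary planar control system with control `θ`. -/
def velA (ω γ : ℝ) (θ : ℝ → ℝ) (c : ℝ → ℝ × ℝ) (t : ℝ) : ℝ × ℝ :=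
  (-(γ / 2) * (c t).1 - ω * (c t).2 * Real.cos (θ t),
   ω * (c t).1 * Real.cos (θ t) - (γ / 4) * (c t).2 * (3 - Real.cos (2 * θ t))
     + γ * Real.sin (θ t))

/-- Forward reachable set `A₊(p)` of the auxiliary planar control system: endpoints of
absolutely continuous trajectories driven by a measurable control `θ`, encoded via the
integral equation with integrable right-hand side. -/
def reachA (ω γ : ℝ) (p : ℝ × ℝ) : Set (ℝ × ℝ) :=
  {q | ∃ (T : ℝ) (θ : ℝ → ℝ) (c : ℝ → ℝ × ℝ), 0 ≤ T ∧ Measurable θ ∧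
    IntervalIntegrable (velA ω γ θ c) volume 0 T ∧
    (∀ t ∈ Icc 0 T, c t = p + ∫ s in (0:ℝ)..t, velA ω γ θ c s) ∧
    c T = q}

open Filter Topology

section Reachability

variable {ω γ : ℝ} {θ : ℝ → ℝ} {c : ℝ → ℝ × ℝ}

lemma continuous_velA (hθ : Continuous θ) (hc : Continuous c) :
    Continuous (velA ω γ θ c) := by
  unfold velA
  fun_prop

lemma mem_reachA_of_hasDerivAt {p : ℝ × ℝ} (hθ : Continuous θ) (hc0 : c 0 = p)
    (hc : ∀ t, HasDerivAt c (velA ω γ θ c t) t) {T : ℝ} (hT : 0 ≤ T) :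
    c T ∈ reachA ω γ p := by
  have hv : Continuous (velA ω γ θ c) :=
    continuous_velA hθ (continuous_iff_continuousAt.2 fun t => (hc t).continuousAt)
  refine ⟨T, θ, c, hT, hθ.measurable, hv.intervalIntegrable 0 T, fun t _ => ?_, rfl⟩
  rw [intervalIntegral.integral_eq_sub_of_hasDerivAt (fun s _ => hc s)
    (hv.intervalIntegrable 0 t), hc0]
  abel

lemma mem_closure_reachA_of_tendsto {p q : ℝ × ℝ} (hθ : Continuous θ) (hc0 : c 0 = p)
    (hc : ∀ t, HasDerivAt c (velA ω γ θ c t) t) (hlim : Tendsto c atTop (𝓝 q)) :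
    q ∈ closure (reachA ω γ p) :=
  mem_closure_of_tendsto hlim <|
    (eventually_ge_atTop 0).mono fun _ hT => mem_reachA_of_hasDerivAt hθ hc0 hc hT

end Reachability

lemma tendsto_exp_neg_mul_atTop_nhds_zero {a : ℝ} (ha : 0 < a) :
    Tendsto (fun t => Real.exp (-a * t)) atTop (𝓝 0) :=
  Real.tendsto_exp_atBot.comp (tendsto_id.const_mul_atTop_of_neg (neg_neg_of_pos ha))

def southTrajectory (γ t : ℝ) : ℝ × ℝ :=
  (0, -1 + 2 * Real.exp (-γ * t))

lemma hasDerivAt_southTrajectory (ω γ t : ℝ) :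
    HasDerivAt (southTrajectory γ)
      (velA ω γ (fun _ => -(Real.pi / 2)) (southTrajectory γ) t) t := by
  have hR : HasDerivAt (fun t => -1 + 2 * Real.exp (-γ * t))
      (2 * (Real.exp (-γ * t) * (-γ))) t := by
    simpa using (((hasDerivAt_id t).const_mul (-γ)).exp.const_mul 2).const_add (-1)
  refine ((hasDerivAt_const t (0 : ℝ)).prodMk hR).congr_deriv ?_
  have hcos : Real.cos (2 * -(Real.pi / 2)) = -1 := by
    rw [show 2 * -(Real.pi / 2) = -Real.pi by ring, Real.cos_neg, Real.cos_pi]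
  simp only [velA, southTrajectory, Real.cos_neg, Real.cos_pi_div_two, Real.sin_neg,
    Real.sin_pi_div_two, hcos, Prod.mk.injEq]
  constructor <;> ring

lemma tendsto_southTrajectory {γ : ℝ} (hγ : 0 < γ) :
    Tendsto (southTrajectory γ) atTop (𝓝 (0, -1)) := by
  have hR : Tendsto (fun t => -1 + 2 * Real.exp (-γ * t)) atTop (𝓝 (-1)) := by
    simpa using ((tendsto_exp_neg_mul_atTop_nhds_zero hγ).const_mul 2).const_add (-1)
  exact tendsto_const_nhds.prodMk_nhds hR

def originTrajectory (ω γ t : ℝ) : ℝ × ℝ :=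
  (-(Real.exp (-(γ / 2) * t) * Real.sin (ω * t)), Real.exp (-(γ / 2) * t) * Real.cos (ω * t))

lemma hasDerivAt_originTrajectory (ω γ t : ℝ) :
    HasDerivAt (originTrajectory ω γ) (velA ω γ (fun _ => 0) (originTrajectory ω γ) t) t := by
  have hexp : HasDerivAt (fun t => Real.exp (-(γ / 2) * t))
      (Real.exp (-(γ / 2) * t) * (-(γ / 2))) t := by
    simpa using ((hasDerivAt_id t).const_mul (-(γ / 2))).exp
  have hsin : HasDerivAt (fun t => Real.sin (ω * t)) (Real.cos (ω * t) * ω) t := by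
    simpa using ((hasDerivAt_id t).const_mul ω).sin
  have hcos : HasDerivAt (fun t => Real.cos (ω * t)) (-Real.sin (ω * t) * ω) t := by
    simpa using ((hasDerivAt_id t).const_mul ω).cos
  refine ((hexp.mul hsin).neg.prodMk (hexp.mul hcos)).congr_deriv ?_
  simp only [velA, originTrajectory, mul_zero, Real.cos_zero, Real.sin_zero, Prod.mk.injEq]
  constructor <;> ring

lemma tendsto_originTrajectory (ω : ℝ) {γ : ℝ} (hγ : 0 < γ) :
    Tendsto (originTrajectory ω γ) atTop (𝓝 (0, 0)) := by
  have hexp := tendsto_exp_neg_mul_atTop_nhds_zero (half_pos hγ)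
  have hsin : IsBoundedUnder (· ≤ ·) atTop fun t => ‖Real.sin (ω * t)‖ :=
    isBoundedUnder_of ⟨1, fun t => by simpa using Real.abs_sin_le_one (ω * t)⟩
  have hcos : IsBoundedUnder (· ≤ ·) atTop fun t => ‖Real.cos (ω * t)‖ :=
    isBoundedUnder_of ⟨1, fun t => by simpa using Real.abs_cos_le_one (ω * t)⟩
  unfold originTrajectory
  simpa only [neg_zero] using (hexp.zero_mul_isBoundedUnder_le hsin).neg.prodMk_nhds
    (hexp.zero_mul_isBoundedUnder_le hcos)

theorem south_pole_origin_asymptotically_reachable_general (ω γ : ℝ) (hγ : 0 < γ) :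
    ((0:ℝ), (-1:ℝ)) ∈ closure (reachA ω γ (0, 1)) ∧
      ((0:ℝ), (0:ℝ)) ∈ closure (reachA ω γ (0, 1)) :=
  ⟨mem_closure_reachA_of_tendsto continuous_const (by norm_num [southTrajectory])
      (hasDerivAt_southTrajectory ω γ) (tendsto_southTrajectory hγ),
    mem_closure_reachA_of_tendsto continuous_const (by simp [originTrajectory])
      (hasDerivAt_originTrajectory ω γ) (tendsto_originTrajectory ω hγ)⟩

/-- The south pole `(0,−1)` and the origin `(0,0)` are asymptotically reachable from `(0,1)`
in the auxiliary planar control system. -/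
theorem south_pole_origin_asymptotically_reachable (ω γ : ℝ) (hω : 0 < ω) (hγ : 0 < γ) :
    ((0:ℝ), (-1:ℝ)) ∈ closure (reachA ω γ (0, 1)) ∧
      ((0:ℝ), (0:ℝ)) ∈ closure (reachA ω γ (0, 1)) :=
  south_pole_origin_asymptotically_reachable_general ω γ hγ
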